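/- Let G be an amenable group acting on a pathwise connected poset K by order-preserving bijections. Then: (i) every G-covariant C*-net bundle over K that has a state has a G-invariant state; (ii) if in addition the fundamental group π₁ᵒ(K) is amenable, then every nondegenerate G-covariant net of C*-algebras over K has a G-invariant state. -/

import Mathlib

noncomputable section

universe u v w u' v' w' u'' v'' w''

namespace AQFT

/-! ### Simplices and paths in a poset -/

structure Simplex1 (K : Type u) [PartialOrder K] : Type u where
  supp : K
  d0 : K
  d1 : K
  le0 : d0 ≤ supp
  le1 : d1 ≤ supp

namespace Simplex1

variable {K : Type u} [PartialOrder K]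

def op (s : Simplex1 K) : Simplex1 K := ⟨s.supp, s.d1, s.d0, s.le1, s.le0⟩

def deg (a : K) : Simplex1 K := ⟨a, a, a, le_rfl, le_rfl⟩

def map {L : Type u'} [PartialOrder L] (f : K →o L) (s : Simplex1 K) : Simplex1 L :=
  ⟨f s.supp, f s.d0, f s.d1, f.monotone s.le0, f.monotone s.le1⟩

end Simplex1

structure Simplex2 (K : Type u) [PartialOrder K] : Type u where
  supp : K
  d0 : Simplex1 K
  d1 : Simplex1 K
  d2 : Simplex1 K
  le0 : d0.supp ≤ supp
  le1 : d1.supp ≤ supp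
  le2 : d2.supp ≤ supp
  h00 : d0.d0 = d1.d0
  h11 : d1.d1 = d2.d1
  h10 : d0.d1 = d2.d0

inductive SPath (K : Type u) [PartialOrder K] : K → K → Type u
  | nil (a : K) : SPath K a a
  | cons {a b c : K} (p : SPath K a b) (s : Simplex1 K) (h1 : s.d1 = b) (h0 : s.d0 = c) :
      SPath K a c

namespace SPath

variable {K : Type u} [PartialOrder K]

/-- The path consisting of a single 1-simplex. -/
def single {a b : K} (s : Simplex1 K) (h1 : s.d1 = a) (h0 : s.d0 = b) : SPath K a b :=
  .cons (.nil a) s h1 h0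

/-- Composition of paths: first traverse `p`, then `q`. -/
def comp {a b : K} (p : SPath K a b) : {c : K} → SPath K b c → SPath K a c
  | _, .nil _ => p
  | _, .cons q s h1 h0 => .cons (p.comp q) s h1 h0

/-- The opposite (reverse) of a path. -/
def reverse {a : K} : {b : K} → SPath K a b → SPath K b a
  | _, .nil _ => .nil a
  | _, .cons p s h1 h0 => (single s.op h0 h1).comp p.reverse

@[simp] theorem comp_nil {a b : K} (p : SPath K a b) : p.comp (.nil b) = p := rfl

@[simp] theorem nil_comp {a b : K} (p : SPath K a b) : (SPath.nil a).comp p = p := by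
  induction p with
  | nil => rfl
  | cons p s h1 h0 ih =>
      show SPath.cons ((SPath.nil _).comp p) s h1 h0 = _
      rw [ih]

theorem comp_assoc {a b c d : K} (p : SPath K a b) (q : SPath K b c) (r : SPath K c d) :
    (p.comp q).comp r = p.comp (q.comp r) := by
  induction r with
  | nil => rfl
  | cons r s h1 h0 ih =>
      show SPath.cons ((p.comp q).comp r) s h1 h0 = SPath.cons (p.comp (q.comp r)) s h1 h0
      rw [ih]

/-- All 1-simplices of the path have support `≤ o`. -/
def SuppLE (o : K) {a : K} : {b : K} → SPath K a b → Prop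
  | _, .nil _ => True
  | _, .cons p s _ _ => SuppLE o p ∧ s.supp ≤ o

/-- All supports and faces of the path belong to `P`. -/
def MemAll (P : Set K) {a : K} : {b : K} → SPath K a b → Prop
  | _, .nil _ => True
  | _, .cons p s _ _ => MemAll P p ∧ s.supp ∈ P ∧ s.d0 ∈ P ∧ s.d1 ∈ P

theorem SuppLE.comp {o : K} {a b c : K} {p : SPath K a b} {q : SPath K b c}
    (hp : SuppLE o p) (hq : SuppLE o q) : SuppLE o (p.comp q) := by
  induction q with
  | nil => exact hp
  | cons q s h1 h0 ih => exact ⟨ih hq.1, hq.2⟩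

theorem SuppLE.reverse {o : K} {a b : K} {p : SPath K a b} (hp : SuppLE o p) :
    SuppLE o p.reverse := by
  induction p with
  | nil => trivial
  | cons p s h1 h0 ih => exact SuppLE.comp ⟨trivial, hp.2⟩ (ih hp.1)

/-- Mapping paths along a monotone map. -/
def map {L : Type u'} [PartialOrder L] (f : K →o L) {a : K} :
    {b : K} → SPath K a b → SPath L (f a) (f b)
  | _, .nil _ => .nil (f a)
  | _, .cons p s h1 h0 => .cons (map f p) (s.map f) (congrArg f h1) (congrArg f h0)

/-- The path of the nerve 1-simplex associated with an inclusion `o ≤ a`. -/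
def nervePath {o a : K} (h : o ≤ a) : SPath K o a :=
  single ⟨a, a, o, le_rfl, h⟩ rfl rfl

/-! ### Homotopy of paths -/

inductive Homotopic : {a b : K} → SPath K a b → SPath K a b → Prop
  | refl {a b : K} (p : SPath K a b) : Homotopic p p
  | symm {a b : K} {p q : SPath K a b} : Homotopic p q → Homotopic q p
  | trans {a b : K} {p q r : SPath K a b} : Homotopic p q → Homotopic q r → Homotopic p r
  | comp_congr {a b c : K} {p p' : SPath K a b} {q q' : SPath K b c} :
      Homotopic p p' → Homotopic q q' → Homotopic (p.comp q) (p'.comp q')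
  | degen {a : K} (s : Simplex1 K) (h0 : s.d0 = a) (h1 : s.d1 = a) (hs : s.supp = a) :
      Homotopic (SPath.nil a) (single s h1 h0)
  | triangle {a b : K} (c : Simplex2 K) (h1 : c.d2.d1 = a) (h0 : c.d0.d0 = b) :
      Homotopic ((single c.d2 h1 rfl).comp (single c.d0 c.h10 h0))
        (single c.d1 (c.h11.trans h1) (c.h00.symm.trans h0))

theorem single_comp_op {a b : K} (s : Simplex1 K) (h1 : s.d1 = a) (h0 : s.d0 = b) :
    Homotopic ((single s h1 h0).comp (single s.op h0 h1)) (SPath.nil a) := by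
  subst h1; subst h0
  have ht := Homotopic.triangle
    (⟨s.supp, s.op, Simplex1.deg s.d1, s, le_rfl, s.le1, le_rfl, rfl, rfl, rfl⟩ : Simplex2 K)
    rfl rfl
  have hd := Homotopic.degen (K := K) (Simplex1.deg s.d1) rfl rfl rfl
  exact ht.trans hd.symm

theorem comp_reverse_self {a b : K} (p : SPath K a b) :
    Homotopic (p.comp p.reverse) (SPath.nil a) := by
  induction p with
  | nil => exact .refl _
  | cons p s h1 h0 ih =>
      show Homotopic ((p.comp (single s h1 h0)).comp ((single s.op h0 h1).comp p.reverse)) _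
      rw [comp_assoc, ← comp_assoc (single s h1 h0)]
      have h2 : Homotopic (((single s h1 h0).comp (single s.op h0 h1)).comp p.reverse)
          p.reverse := by
        have h3 := Homotopic.comp_congr (single_comp_op s h1 h0) (Homotopic.refl p.reverse)
        rwa [nil_comp] at h3
      exact (Homotopic.comp_congr (Homotopic.refl p) h2).trans ih

theorem reverse_comp_self {a b : K} (p : SPath K a b) :
    Homotopic (p.reverse.comp p) (SPath.nil b) := by
  induction p with
  | nil => exact .refl _
  | cons p s h1 h0 ih =>
      show Homotopic (((single s.op h0 h1).comp p.reverse).comp (p.comp (single s h1 h0))) _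
      rw [comp_assoc, ← comp_assoc p.reverse]
      have h2 : Homotopic ((p.reverse.comp p).comp (single s h1 h0)) (single s h1 h0) := by
        have h3 := Homotopic.comp_congr ih (Homotopic.refl (single s h1 h0))
        rwa [nil_comp] at h3
      have h4 : Homotopic ((single s.op h0 h1).comp ((p.reverse.comp p).comp (single s h1 h0)))
          ((single s.op h0 h1).comp (single s h1 h0)) :=
        Homotopic.comp_congr (Homotopic.refl _) h2
      exact h4.trans (single_comp_op s.op h0 h1)

theorem Homotopic.reverse_congr {a b : K} {p q : SPath K a b} (h : Homotopic p q) :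
    Homotopic p.reverse q.reverse := by
  have e1 : Homotopic p.reverse (p.reverse.comp (q.comp q.reverse)) :=
    Homotopic.comp_congr (Homotopic.refl p.reverse) (comp_reverse_self q).symm
  have e2 : Homotopic (p.reverse.comp (q.comp q.reverse)) ((p.reverse.comp p).comp q.reverse) := by
    rw [comp_assoc]
    exact Homotopic.comp_congr (Homotopic.refl _)
      (Homotopic.comp_congr h.symm (Homotopic.refl _))
  have e3 : Homotopic ((p.reverse.comp p).comp q.reverse) q.reverse := by
    have h3 := Homotopic.comp_congr (reverse_comp_self p) (Homotopic.refl q.reverse)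
    rwa [nil_comp] at h3
  exact (e1.trans e2).trans e3

end SPath

/-! ### The fundamental group of a poset -/

instance homotopySetoid (K : Type u) [PartialOrder K] (o : K) : Setoid (SPath K o o) where
  r := SPath.Homotopic
  iseqv := ⟨fun p => .refl p, fun h => h.symm, fun h h' => h.trans h'⟩

def Pi1 (K : Type u) [PartialOrder K] (o : K) : Type u := Quotient (homotopySetoid K o)

namespace Pi1

variable {K : Type u} [PartialOrder K] {o : K}

def mk (p : SPath K o o) : Pi1 K o := Quotient.mk _ p

instance : One (Pi1 K o) := ⟨mk (SPath.nil o)⟩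

instance : Mul (Pi1 K o) :=
  ⟨Quotient.map₂ (fun p q => q.comp p)
    (fun _ _ hp _ _ hq => SPath.Homotopic.comp_congr hq hp)⟩

instance : Inv (Pi1 K o) :=
  ⟨Quotient.map SPath.reverse (fun _ _ h => h.reverse_congr)⟩

instance : Group (Pi1 K o) where
  mul_assoc x y z := by
    refine Quotient.inductionOn₃ x y z ?_
    intro p q r
    show mk (r.comp (q.comp p)) = mk ((r.comp q).comp p)
    rw [SPath.comp_assoc]
  one_mul x := Quotient.inductionOn x fun p => rfl
  mul_one x := Quotient.inductionOn x fun p => congrArg mk (SPath.nil_comp p)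
  inv_mul_cancel x := Quotient.inductionOn x fun p => Quotient.sound (SPath.comp_reverse_self p)

end Pi1

/-! ### Nets of C*-algebras over a poset -/

open scoped ComplexOrder

variable {K : Type u} [PartialOrder K]

structure CStarNet (K : Type u) [PartialOrder K] where
  fib : K → Type v
  [cstar : ∀ o, CStarAlgebra (fib o)]
  incl : ∀ ⦃a o : K⦄, a ≤ o → (fib a →⋆ₐ[ℂ] fib o)
  incl_injective : ∀ ⦃a o : K⦄ (h : a ≤ o), Function.Injective (incl h)
  incl_comp : ∀ ⦃e a o : K⦄ (h1 : e ≤ a) (h2 : a ≤ o) (x : fib e),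
      incl h2 (incl h1 x) = incl (h1.trans h2) x

attribute [instance] CStarNet.cstar

/-- A C*-net bundle: all the inclusion maps are isomorphisms. -/
def IsCStarNetBundle (N : CStarNet.{u, v} K) : Prop :=
  ∀ ⦃a o : K⦄ (h : a ≤ o), Function.Bijective (N.incl h)

/-- Morphisms of nets over (possibly) different posets, over the poset map `f`. -/
def IsNetMorphism {K : Type u} {S : Type u'} [PartialOrder K] [PartialOrder S]
    (N : CStarNet.{u, v} K) (M : CStarNet.{u', v'} S) (f : K →o S)
    (φ : ∀ o : K, N.fib o →⋆ₐ[ℂ] M.fib (f o)) : Prop :=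
  ∀ ⦃a o : K⦄ (h : a ≤ o) (x : N.fib a), φ o (N.incl h x) = M.incl (f.monotone h) (φ a x)

/-- Morphisms of nets over the same poset (over the identity of the poset). -/
def IsNetMorphismOver (N : CStarNet.{u, v} K) (M : CStarNet.{u, v'} K)
    (φ : ∀ o : K, N.fib o →⋆ₐ[ℂ] M.fib o) : Prop :=
  ∀ ⦃a o : K⦄ (h : a ≤ o) (x : N.fib a), φ o (N.incl h x) = M.incl h (φ a x)

namespace CStarNet

def fibCast (N : CStarNet.{u, v} K) {a b : K} (h : a = b) : N.fib a ≃⋆ₐ[ℂ] N.fib b := by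
  subst h; exact StarAlgEquiv.refl ℂ _

/-- The isomorphism determined by an inclusion map of a C*-net bundle. -/
def holEquiv (N : CStarNet.{u, v} K) (hN : IsCStarNetBundle N) ⦃a o : K⦄ (h : a ≤ o) :
    N.fib a ≃⋆ₐ[ℂ] N.fib o :=
  StarAlgEquiv.ofBijective (N.incl h) (hN h)

/-- The 1-cocycle `j_b` associated with a 1-simplex `b` of the poset. -/
def hol1 (N : CStarNet.{u, v} K) (hN : IsCStarNetBundle N) (s : Simplex1 K) :
    N.fib s.d1 ≃⋆ₐ[ℂ] N.fib s.d0 :=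
  (N.holEquiv hN s.le1).trans (N.holEquiv hN s.le0).symm

/-- The extension `j_p` of the 1-cocycle from 1-simplices to paths. -/
def holPath (N : CStarNet.{u, v} K) (hN : IsCStarNetBundle N) {a : K} :
    {b : K} → SPath K a b → (N.fib a ≃⋆ₐ[ℂ] N.fib b)
  | _, .nil _ => StarAlgEquiv.refl ℂ _
  | _, .cons p s h1 h0 =>
      (holPath N hN p).trans (((N.fibCast h1.symm).trans (N.hol1 hN s)).trans (N.fibCast h0))

end CStarNet

/-- A net is trivial if it is isomorphic to a constant net bundle. -/
def IsTrivialNet (N : CStarNet.{u, v} K) : Prop :=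
  ∀ o₀ : K, ∃ τ : ∀ a, N.fib a ≃⋆ₐ[ℂ] N.fib o₀,
    ∀ ⦃a o : K⦄ (h : a ≤ o) (x : N.fib a), τ o (N.incl h x) = τ a x

/-- `(NB, ε)` is an enveloping net bundle of the net `N`. -/
def IsEnvelope (N : CStarNet.{u, v} K) (NB : CStarNet.{u, max u v} K)
    (ε : ∀ o, N.fib o →⋆ₐ[ℂ] NB.fib o) : Prop :=
  IsCStarNetBundle NB ∧ IsNetMorphismOver N NB ε ∧
    ∀ (M : CStarNet.{u, max u v} K), IsCStarNetBundle M →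
      ∀ ψ : ∀ o, N.fib o →⋆ₐ[ℂ] M.fib o, IsNetMorphismOver N M ψ →
        ∃! ψu : ∀ o, NB.fib o →⋆ₐ[ℂ] M.fib o,
          IsNetMorphismOver NB M ψu ∧ ∀ o x, ψu o (ε o x) = ψ o x

/-- The net `N` is nondegenerate w.r.t. the enveloping net bundle `NB`. -/
def IsNondegenerate (NB : CStarNet.{u, v'} K) : Prop :=
  ∀ o : K, Nontrivial (NB.fib o)

/-! ### States -/

/-- A state on a unital C*-algebra. -/
structure CStarAlgState (A : Type v) [CStarAlgebra A] where
  lin : A →ₗ[ℂ] ℂ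
  map_one : lin 1 = 1
  pos : ∀ a : A, 0 ≤ lin (star a * a)

/-- A state on a net of C*-algebras. -/
structure NetState (N : CStarNet.{u, v} K) where
  st : ∀ o, CStarAlgState (N.fib o)
  compat : ∀ ⦃o a : K⦄ (h : o ≤ a) (x : N.fib o), (st a).lin (N.incl h x) = (st o).lin x

/-! ### Representations -/

structure NetRep (N : CStarNet.{u, v} K) where
  H : K → Type w
  [nacg : ∀ o, NormedAddCommGroup (H o)]
  [ips : ∀ o, InnerProductSpace ℂ (H o)]
  [cpl : ∀ o, CompleteSpace (H o)]
  rep : ∀ o, N.fib o →⋆ₐ[ℂ] (H o →L[ℂ] H o)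
  U : ∀ ⦃o a : K⦄, o ≤ a → (H o ≃ₗᵢ[ℂ] H a)
  intertwine : ∀ ⦃o a : K⦄ (h : o ≤ a) (x : N.fib o) (v : H o),
      U h (rep o x v) = rep a (N.incl h x) (U h v)
  U_comp : ∀ ⦃o a e : K⦄ (h1 : o ≤ a) (h2 : a ≤ e) (v : H o),
      U h2 (U h1 v) = U (h1.trans h2) v

attribute [instance] NetRep.nacg NetRep.ips NetRep.cpl

namespace NetRep

variable {N : CStarNet.{u, v} K}

def hCast (R : NetRep.{u, v, w} N) {a b : K} (h : a = b) : R.H a ≃ₗᵢ[ℂ] R.H b := by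
  subst h; exact LinearIsometryEquiv.refl ℂ _

/-- The unitary `U_b` associated with a 1-simplex `b`. -/
def U1 (R : NetRep.{u, v, w} N) (s : Simplex1 K) : R.H s.d1 ≃ₗᵢ[ℂ] R.H s.d0 :=
  (R.U s.le1).trans (R.U s.le0).symm

/-- The unitary `U_p` associated with a path `p`. -/
def Upath (R : NetRep.{u, v, w} N) {a : K} : {b : K} → SPath K a b → (R.H a ≃ₗᵢ[ℂ] R.H b)
  | _, .nil _ => LinearIsometryEquiv.refl ℂ _
  | _, .cons p s h1 h0 =>
      (Upath R p).trans (((R.hCast h1.symm).trans (R.U1 s)).trans (R.hCast h0))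

/-- A representation is faithful if all the `π_o` are injective. -/
def Faithful (R : NetRep.{u, v, w} N) : Prop := ∀ o, Function.Injective (R.rep o)

/-- A representation vanishes if all the `π_o` are zero. -/
def Vanishes (R : NetRep.{u, v, w} N) : Prop := ∀ (o) (x : N.fib o), R.rep o x = 0

/-- Quasi (topologically) trivial representation: the loop unitaries commute with the
representation of the corresponding fibre. -/
def QuasiTrivial (R : NetRep.{u, v, w} N) : Prop :=
  ∀ (o : K) (p : SPath K o o) (x : N.fib o) (v : R.H o),
    R.Upath p (R.rep o x v) = R.rep o x (R.Upath p v)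

/-- Unitary equivalence of representations. -/
def Equiv (R : NetRep.{u, v, w} N) (R' : NetRep.{u, v, w'} N) : Prop :=
  ∃ T : ∀ o, R.H o ≃ₗᵢ[ℂ] R'.H o,
    (∀ (o) (x : N.fib o) (v : R.H o), T o (R.rep o x v) = R'.rep o x (T o v)) ∧
    (∀ ⦃o a : K⦄ (h : o ≤ a) (v : R.H o), T a (R.U h v) = R'.U h (T o v))

end NetRep

/-- The representation of `N` obtained by composing a representation of `NB` with
a morphism `ε : N → NB` of nets over `K`. -/
def NetRep.ofEnvelope {N : CStarNet.{u, v} K} {NB : CStarNet.{u, v'} K}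
    (ε : ∀ o, N.fib o →⋆ₐ[ℂ] NB.fib o) (hε : IsNetMorphismOver N NB ε)
    (R : NetRep.{u, v', w} NB) : NetRep.{u, v, w} N where
  H := R.H
  rep o := (R.rep o).comp (ε o)
  U := R.U
  intertwine := by
    intro o a h x v
    show R.U h (R.rep o (ε o x) v) = R.rep a (ε a (N.incl h x)) (R.U h v)
    rw [hε h x]
    exact R.intertwine h (ε o x) v
  U_comp := R.U_comp

/-- Covariant representations of the holonomy dynamical system of a C*-net bundle,
with the action of the fundamental group presented at the level of loops. -/
structure CovRep (N : CStarNet.{u, v} K) (hN : IsCStarNetBundle N) (o : K) where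
  H : Type w
  [nacg : NormedAddCommGroup H]
  [ips : InnerProductSpace ℂ H]
  [cpl : CompleteSpace H]
  eta : N.fib o →⋆ₐ[ℂ] (H →L[ℂ] H)
  V : SPath K o o → (H ≃ₗᵢ[ℂ] H)
  V_hom : ∀ p q : SPath K o o, SPath.Homotopic p q → V p = V q
  V_mul : ∀ p q : SPath K o o, V (p.comp q) = (V p).trans (V q)
  cov : ∀ (p : SPath K o o) (x : N.fib o) (v : H),
      eta (N.holPath hN p x) (V p v) = V p (eta x v)

attribute [instance] CovRep.nacg CovRep.ips CovRep.cpl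

/-- Equivalence of covariant representations. -/
def CovRep.Equiv {N : CStarNet.{u, v} K} {hN : IsCStarNetBundle N} {o : K}
    (C : CovRep.{u, v, w} N hN o) (C' : CovRep.{u, v, w'} N hN o) : Prop :=
  ∃ W : C.H ≃ₗᵢ[ℂ] C'.H,
    (∀ (x : N.fib o) (v : C.H), W (C.eta x v) = C'.eta x (W v)) ∧
    (∀ (p : SPath K o o) (v : C.H), W (C.V p v) = C'.V p (W v))

/-- A representation of a single C*-algebra on a Hilbert space. -/
structure AlgRep (A : Type v) [CStarAlgebra A] where
  H : Type w
  [nacg : NormedAddCommGroup H]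
  [ips : InnerProductSpace ℂ H]
  [cpl : CompleteSpace H]
  rho : A →⋆ₐ[ℂ] (H →L[ℂ] H)

attribute [instance] AlgRep.nacg AlgRep.ips AlgRep.cpl

/-- A Hilbert space representation (on a single Hilbert space) of the restriction of
a net of C*-algebras to a subset `P` of the poset. -/
structure SubNetHSRep (N : CStarNet.{u, v} K) (P : Set K) where
  H : Type w
  [nacg : NormedAddCommGroup H]
  [ips : InnerProductSpace ℂ H]
  [cpl : CompleteSpace H]
  rep : ∀ o ∈ P, N.fib o →⋆ₐ[ℂ] (H →L[ℂ] H)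
  compat : ∀ ⦃a o : K⦄ (ha : a ∈ P) (ho : o ∈ P) (h : a ≤ o) (x : N.fib a),
      rep o ho (N.incl h x) = rep a ha x

attribute [instance] SubNetHSRep.nacg SubNetHSRep.ips SubNetHSRep.cpl

/-! ### Amenability -/

/-- The space `ℓ∞(G)` of bounded real-valued functions on `G`. -/
def BddFuns (G : Type w) : Submodule ℝ (G → ℝ) where
  carrier := {f | ∃ C, ∀ g, |f g| ≤ C}
  add_mem' := by
    rintro f g ⟨C, hC⟩ ⟨D, hD⟩
    exact ⟨C + D, fun x => (abs_add_le _ _).trans (add_le_add (hC x) (hD x))⟩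
  zero_mem' := ⟨0, by simp⟩
  smul_mem' := by
    rintro c f ⟨C, hC⟩
    refine ⟨|c| * C, fun x => ?_⟩
    have : |c • f x| = |c| * |f x| := by simp [abs_mul]
    calc |(c • f) x| = |c| * |f x| := by simpa using this
      _ ≤ |c| * C := mul_le_mul_of_nonneg_left (hC x) (abs_nonneg c)

def BddFuns.const (G : Type w) (r : ℝ) : BddFuns G :=
  ⟨fun _ => r, ⟨|r|, fun _ => le_rfl⟩⟩

def BddFuns.rtrans {G : Type w} [Group G] (f : BddFuns G) (h : G) : BddFuns G :=
  ⟨fun g => (f : G → ℝ) (g * h), by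
    obtain ⟨C, hC⟩ := f.2
    exact ⟨C, fun g => hC (g * h)⟩⟩

/-- A right invariant mean on `ℓ∞(G)`. -/
structure RightInvariantMean (G : Type w) [Group G] where
  mean : BddFuns G →ₗ[ℝ] ℝ
  nonneg : ∀ f : BddFuns G, (∀ g, 0 ≤ (f : G → ℝ) g) → 0 ≤ mean f
  normalized : mean (BddFuns.const G 1) = 1
  rightInv : ∀ (f : BddFuns G) (h : G), mean (BddFuns.rtrans f h) = mean f

/-- Amenability of a (discrete) group. -/
def IsAmenable (G : Type w) [Group G] : Prop := Nonempty (RightInvariantMean G)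

/-! ### Covariant nets -/

/-- A `G`-covariant structure on a net of C*-algebras, where `G` acts on the poset `K`
by order preserving bijections. -/
structure CovariantNet {G : Type w} [Group G] [MulAction G K]
    (hord : ∀ (g : G) (a b : K), a ≤ b → g • a ≤ g • b) (N : CStarNet.{u, v} K) where
  act : ∀ (g : G) (o : K), N.fib o ≃⋆ₐ[ℂ] N.fib (g • o)
  act_mul : ∀ (g h : G) (o : K) (x : N.fib o),
      N.fibCast (mul_smul h g o) (act (h * g) o x) = act h (g • o) (act g o x)
  act_incl : ∀ (g : G) ⦃a o : K⦄ (hao : a ≤ o) (x : N.fib a),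
      act g o (N.incl hao x) = N.incl (hord g a o hao) (act g a x)

/-- A `G`-invariant state of a `G`-covariant net. -/
def NetState.Invariant {G : Type w} [Group G] [MulAction G K]
    {hord : ∀ (g : G) (a b : K), a ≤ b → g • a ≤ g • b} {N : CStarNet.{u, v} K}
    (α : CovariantNet hord N) (ω : NetState N) : Prop :=
  ∀ (g : G) (o : K) (x : N.fib o), (ω.st (g • o)).lin (α.act g o x) = (ω.st o).lin x

/-! ### The generalized Čech cocycle -/

/-- A 1-simplex of the simplicial set `Σ°_*(K)`: two vertices and a nonempty support
`F` lying below both of them. -/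
structure CechSimplex1 (K : Type u) [PartialOrder K] : Type u where
  F : Set K
  hne : F.Nonempty
  src : K
  tgt : K
  hsrc : ∀ a ∈ F, a ≤ src
  htgt : ∀ a ∈ F, a ≤ tgt

def CechSimplex1.swap (s : CechSimplex1 K) : CechSimplex1 K :=
  ⟨s.F, s.hne, s.tgt, s.src, s.htgt, s.hsrc⟩

/-- `A^F_o`: the C*-subalgebra of the fibre over `o` generated by the images of the
fibres over the elements of `F`. -/
def CStarNet.fibGen (N : CStarNet.{u, v} K) (F : Set K) (o : K) (hF : ∀ a ∈ F, a ≤ o) :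
    StarSubalgebra ℂ (N.fib o) :=
  (StarAlgebra.adjoin ℂ (⋃ a, ⋃ h : a ∈ F, Set.range (N.incl (hF a h)))).topologicalClosure

theorem CStarNet.mem_fibGen (N : CStarNet.{u, v} K) {F : Set K} {o : K}
    (hF : ∀ a ∈ F, a ≤ o) {a : K} (ha : a ∈ F) (x : N.fib a) :
    N.incl (hF a ha) x ∈ N.fibGen F o hF :=
  StarSubalgebra.le_topologicalClosure _
    (StarAlgebra.subset_adjoin ℂ _
      (Set.mem_iUnion.2 ⟨a, Set.mem_iUnion.2 ⟨ha, Set.mem_range_self x⟩⟩))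

/-- A generalized Čech cocycle of the net `N` defined over the collection `D` of
1-simplices of `Σ°_*(K)`. -/
structure CechCocycle (N : CStarNet.{u, v} K) (D : Set (CechSimplex1 K)) where
  zeta : ∀ s ∈ D, (N.fibGen s.F s.src s.hsrc ≃⋆ₐ[ℂ] N.fibGen s.F s.tgt s.htgt)
  compat : ∀ (s : CechSimplex1 K) (hs : s ∈ D) ⦃a : K⦄ (ha : a ∈ s.F) (x : N.fib a),
      (zeta s hs ⟨N.incl (s.hsrc a ha) x, N.mem_fibGen s.hsrc ha x⟩ : N.fib s.tgt)
        = N.incl (s.htgt a ha) x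

/-- The domain of the Čech cocycle of a net: the union of all the domains over which
a Čech cocycle of the net exists. -/
def CechDomain (N : CStarNet.{u, v} K) : Set (CechSimplex1 K) :=
  {s | ∃ D : Set (CechSimplex1 K), Nonempty (CechCocycle N D) ∧ s ∈ D}


/-- A representation of a C*-net bundle and a covariant representation of its holonomy
dynamical system correspond to each other. -/
def MatchesCov {N : CStarNet.{u, v} K} {hN : IsCStarNetBundle N} {o : K}
    (R : NetRep.{u, v, w} N) (C : CovRep.{u, v, w'} N hN o) : Prop :=
  ∃ W : R.H o ≃ₗᵢ[ℂ] C.H,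
    (∀ (x : N.fib o) (v : R.H o), W (R.rep o x v) = C.eta x (W v)) ∧
    (∀ (p : SPath K o o) (v : R.H o), W (R.Upath p v) = C.V p (W v))

/-!
The invariant states are obtained by averaging. For a family of states `Φ : Γ → S(A)` and a right
invariant mean `m` on `Γ`, the functional `x ↦ m (γ ↦ Re Φ γ x)`, extended complex linearly, is
again a state, and right invariance of `m` makes it invariant whenever `Φ` is equivariant.

(i) Average the translates `ω_{γo} ∘ α^γ_o` of the given state over `G`.

(ii) A nonzero fibre of the enveloping bundle has a state: a Hahn–Banach functional `f` with
`‖f‖ = f 1 = 1` is positive. Averaging over `π₁(K, o)` its transports around loops gives a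
holonomy invariant state of the fibre over `o`; transporting it along arbitrary paths gives a
state of the bundle, and composing with `ε` a state of the net, to which (i) applies.
-/

namespace CStarAlgState

variable {A : Type v''} [CStarAlgebra A] {B : Type w''} [CStarAlgebra B]

theorem lin_nonneg [PartialOrder A] [StarOrderedRing A] (ω : CStarAlgState A) {x : A}
    (hx : 0 ≤ x) : 0 ≤ ω.lin x := by
  rw [StarOrderedRing.nonneg_iff] at hx
  induction hx using AddSubmonoid.closure_induction with
  | mem _ hy => obtain ⟨y, rfl⟩ := hy; exact ω.pos y
  | zero => simp
  | add _ _ _ _ hy hz => rw [map_add]; exact add_nonneg hy hz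

/-- The constant is crude; what matters is that the bound is uniform over all states. -/
theorem norm_lin_le (ω : CStarAlgState A) (x : A) : ‖ω.lin x‖ ≤ 4 * ‖x‖ := by
  let _ := CStarAlgebra.spectralOrder A
  have := CStarAlgebra.spectralOrderedRing A
  let f : A →ₚ[ℂ] ℂ := .mk₀ ω.lin fun _ => ω.lin_nonneg
  have hf1 : f 1 = 1 := ω.map_one
  obtain ⟨y, hy, hyx, hx⟩ := CStarAlgebra.exists_sum_four_nonneg x
  have hfy : ∀ i, ‖ω.lin (y i)‖ ≤ ‖x‖ := fun i =>
    (f.norm_apply_le_of_nonneg (y i) (hy i)).trans (by rw [hf1, norm_one, one_mul]; exact hyx i)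
  calc ‖ω.lin x‖ = ‖∑ i : Fin 4, Complex.I ^ (i : ℕ) * ω.lin (y i)‖ := by
        conv_lhs => rw [hx]
        simp
    _ ≤ ∑ i : Fin 4, ‖x‖ := norm_sum_le_of_le _ fun i _ => by simpa using hfy i
    _ = 4 * ‖x‖ := by simp

def comap (ω : CStarAlgState B) (φ : A →⋆ₐ[ℂ] B) : CStarAlgState A where
  lin := ω.lin.comp φ.toAlgHom.toLinearMap
  map_one := by simp [ω.map_one]
  pos a := by simpa [map_mul, map_star] using ω.pos (φ a)

@[simp] theorem comap_lin (ω : CStarAlgState B) (φ : A →⋆ₐ[ℂ] B) (x : A) :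
    (ω.comap φ).lin x = ω.lin (φ x) := rfl

end CStarAlgState

section StateExistence

variable {A : Type v''} [CStarAlgebra A]

theorem _root_.IsSelfAdjoint.norm_add_I_smul_one_sq_le [Nontrivial A] {a : A}
    (ha : IsSelfAdjoint a) (t : ℝ) :
    ‖a + ((t : ℂ) * Complex.I) • (1 : A)‖ ^ 2 ≤ ‖a‖ ^ 2 + t ^ 2 := by
  have hstar : star ((t : ℂ) * Complex.I) = -((t : ℂ) * Complex.I) := by simp
  have hsq : (t : ℂ) * Complex.I * -((t : ℂ) * Complex.I) = ((t ^ 2 : ℝ) : ℂ) := by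
    push_cast; ring_nf; simp
  have hmul : star (a + ((t : ℂ) * Complex.I) • (1 : A)) * (a + ((t : ℂ) * Complex.I) • 1)
      = a * a + ((t ^ 2 : ℝ) : ℂ) • 1 := by
    rw [star_add, ha.star_eq, star_smul, star_one]
    simp only [add_mul, mul_add, smul_mul_assoc, mul_smul_comm, one_mul, mul_one]
    rw [hstar, smul_add, smul_smul, hsq, neg_smul]
    abel
  rw [sq, ← CStarRing.norm_star_mul_self, hmul]
  calc _ ≤ ‖a * a‖ + ‖((t ^ 2 : ℝ) : ℂ) • (1 : A)‖ := norm_add_le _ _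
    _ ≤ ‖a‖ ^ 2 + t ^ 2 := by
      rw [sq ‖a‖, norm_smul, norm_one, mul_one, Complex.norm_real,
        Real.norm_of_nonneg (sq_nonneg t)]
      exact add_le_add_left (norm_mul_le a a) _

variable {g : StrongDual ℂ A} (hg : ‖g‖ ≤ 1) (hg1 : g 1 = 1)
include hg hg1

theorem im_apply_eq_zero_of_isSelfAdjoint {a : A} (ha : IsSelfAdjoint a) : (g a).im = 0 := by
  have : Nontrivial A := ⟨1, 0, fun h => by simp [h] at hg1⟩
  have key (t : ℝ) : (g a).re ^ 2 + ((g a).im + t) ^ 2 ≤ ‖a‖ ^ 2 + t ^ 2 := by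
    set v := a + ((t : ℂ) * Complex.I) • (1 : A)
    have hgv : ‖g v‖ ^ 2 = (g a).re ^ 2 + ((g a).im + t) ^ 2 := by
      simp [v, hg1, Complex.sq_norm, Complex.normSq_apply]
      ring
    have hgle : ‖g v‖ ≤ ‖v‖ := by simpa using g.le_of_opNorm_le hg v
    nlinarith [norm_nonneg (g v), ha.norm_add_I_smul_one_sq_le t]
  -- `key t` reads `re² + im² + 2 t im ≤ ‖a‖²`, which fails for large `t` of the sign of `im`.
  by_contra h
  have ht : 2 * (g a).im * (‖a‖ ^ 2 / (2 * (g a).im)) = ‖a‖ ^ 2 := by field_simp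
  nlinarith [key (‖a‖ ^ 2 / (2 * (g a).im)), sq_nonneg (g a).re, sq_pos_of_ne_zero h]

theorem re_apply_nonneg_of_nonneg [PartialOrder A] [StarOrderedRing A] {b : A} (hb : 0 ≤ b) :
    0 ≤ (g b).re := by
  have : Nontrivial A := ⟨1, 0, fun h => by simp [h] at hg1⟩
  set r := algebraMap ℝ A ‖b‖
  have hr : r = ‖b‖ • (1 : A) := Algebra.algebraMap_eq_smul_one _
  have hnorm : ‖r - b‖ ≤ ‖b‖ := by
    have hbr : b ≤ r := (IsSelfAdjoint.of_nonneg hb).le_algebraMap_norm_self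
    calc ‖r - b‖ ≤ ‖r‖ :=
          CStarAlgebra.norm_le_norm_of_nonneg_of_le (sub_nonneg.2 hbr) (sub_le_self r hb)
      _ = ‖b‖ := by simp [hr, norm_smul]
  have hgr : g r = ‖b‖ := by simp [hr, hg1]
  have hre : |‖b‖ - (g b).re| ≤ ‖b‖ := by
    calc |‖b‖ - (g b).re| = |(g (r - b)).re| := by simp [hgr]
      _ ≤ ‖g (r - b)‖ := Complex.abs_re_le_norm _
      _ ≤ ‖r - b‖ := by simpa using g.le_of_opNorm_le hg (r - b)
      _ ≤ ‖b‖ := hnorm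
  linarith [(abs_le.1 hre).2]

end StateExistence

theorem CStarAlgState.nonempty_of_nontrivial (A : Type v'') [CStarAlgebra A] [Nontrivial A] :
    Nonempty (CStarAlgState A) := by
  obtain ⟨g, hg, hg1⟩ := exists_dual_vector ℂ (1 : A) (by simp)
  replace hg1 : g 1 = 1 := by simpa using hg1
  let _ := CStarAlgebra.spectralOrder A
  have := CStarAlgebra.spectralOrderedRing A
  refine ⟨⟨g.toLinearMap, hg1, fun a => Complex.nonneg_iff.2 ⟨?_, ?_⟩⟩⟩
  · exact re_apply_nonneg_of_nonneg hg.le hg1 (star_mul_self_nonneg a)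
  · exact (im_apply_eq_zero_of_isSelfAdjoint hg.le hg1 (.star_mul_self a)).symm

theorem RightInvariantMean.mean_const {Γ : Type u''} [Group Γ] (m : RightInvariantMean Γ)
    (r : ℝ) : m.mean (BddFuns.const Γ r) = r := by
  have h : BddFuns.const Γ r = r • BddFuns.const Γ 1 :=
    Subtype.ext (funext fun _ => by simp [BddFuns.const])
  rw [h, map_smul, m.normalized, smul_eq_mul, mul_one]

section Averaging

variable {Γ : Type u''} {A : Type v''} [CStarAlgebra A] {B : Type w''} [CStarAlgebra B]

def stateRe (Φ : Γ → CStarAlgState A) : A →ₗ[ℝ] BddFuns Γ :=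
  LinearMap.codRestrict (BddFuns Γ)
    (LinearMap.pi fun γ => Complex.reLm.comp ((Φ γ).lin.restrictScalars ℝ))
    fun x => ⟨4 * ‖x‖, fun γ => (Complex.abs_re_le_norm _).trans ((Φ γ).norm_lin_le x)⟩

theorem stateRe_apply (Φ : Γ → CStarAlgState A) (x : A) (γ : Γ) :
    (stateRe Φ x : Γ → ℝ) γ = ((Φ γ).lin x).re := rfl

def avgState [Group Γ] (m : RightInvariantMean Γ) (Φ : Γ → CStarAlgState A) :
    CStarAlgState A where
  lin := Module.Dual.extendRCLike (m.mean ∘ₗ stateRe Φ)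
  map_one := by
    have h1 : stateRe Φ 1 = BddFuns.const Γ 1 :=
      Subtype.ext (funext fun γ => by simp [stateRe_apply, BddFuns.const, (Φ γ).map_one])
    have hI : stateRe Φ (Complex.I • 1) = 0 :=
      Subtype.ext (funext fun γ => by simp [stateRe_apply, (Φ γ).map_one])
    simp [Module.Dual.extendRCLike_apply, h1, hI, m.mean_const]
  pos a := by
    have hI : stateRe Φ (Complex.I • (star a * a)) = 0 :=
      Subtype.ext (funext fun γ => by
        simp [stateRe_apply, ((Complex.nonneg_iff.1 ((Φ γ).pos a)).2).symm])
    have hre : 0 ≤ m.mean (stateRe Φ (star a * a)) :=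
      m.nonneg _ fun γ => (Complex.nonneg_iff.1 ((Φ γ).pos a)).1
    simpa [Module.Dual.extendRCLike_apply, hI, Complex.nonneg_iff] using hre

theorem avgState_lin_eq [Group Γ] (m : RightInvariantMean Γ) {Φ : Γ → CStarAlgState A}
    {Φ' : Γ → CStarAlgState B} (h : Γ) {x : A} {y : B}
    (hxy : ∀ γ, (Φ' γ).lin y = (Φ (γ * h)).lin x) :
    (avgState m Φ').lin y = (avgState m Φ).lin x := by
  have key (c : ℂ) : stateRe Φ' (c • y) = BddFuns.rtrans (stateRe Φ (c • x)) h :=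
    Subtype.ext (funext fun γ => by
      show ((Φ' γ).lin (c • y)).re = ((Φ (γ * h)).lin (c • x)).re
      rw [map_smul, map_smul, hxy])
  have hre : stateRe Φ' y = BddFuns.rtrans (stateRe Φ x) h := by simpa using key 1
  simp only [avgState, Module.Dual.extendRCLike_apply, LinearMap.comp_apply, hre, key,
    m.rightInv]

end Averaging

theorem NetState.lin_fibCast {N : CStarNet.{u, v''} K} (ω : NetState N) {a b : K}
    (h : a = b) (x : N.fib a) : (ω.st b).lin (N.fibCast h x) = (ω.st a).lin x := by
  subst h; rfl

theorem CovariantNet.exists_invariant_netState {G : Type w''} [Group G] [MulAction G K]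
    {hord : ∀ (g : G) (a b : K), a ≤ b → g • a ≤ g • b} {N : CStarNet.{u, v''} K}
    (α : CovariantNet hord N) (m : RightInvariantMean G) (ω : NetState N) :
    ∃ ω' : NetState N, ω'.Invariant α := by
  let Φ (o : K) (γ : G) : CStarAlgState (N.fib o) :=
    (ω.st (γ • o)).comap (α.act γ o : N.fib o →⋆ₐ[ℂ] N.fib (γ • o))
  refine ⟨⟨fun o => avgState m (Φ o), fun o a h x => ?_⟩, fun g o x => ?_⟩
  · refine avgState_lin_eq m 1 fun γ => ?_
    show (ω.st (γ • a)).lin (α.act γ a (N.incl h x))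
      = (ω.st ((γ * 1) • o)).lin (α.act (γ * 1) o x)
    rw [mul_one, α.act_incl γ h x]
    exact ω.compat (hord γ o a h) _
  · refine avgState_lin_eq m g fun γ => ?_
    show (ω.st (γ • g • o)).lin (α.act γ (g • o) (α.act g o x))
      = (ω.st ((γ * g) • o)).lin (α.act (γ * g) o x)
    rw [← α.act_mul g γ o x]
    exact ω.lin_fibCast (mul_smul γ g o) _

namespace CStarNet

theorem incl_le_rfl (N : CStarNet.{u, v''} K) (o : K) (x : N.fib o) : N.incl le_rfl x = x :=
  N.incl_injective le_rfl (N.incl_comp le_rfl le_rfl x)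

variable {N : CStarNet.{u, v''} K} (hN : IsCStarNetBundle N)

theorem incl_hol1 (s : Simplex1 K) {t : K} (h0t : s.d0 ≤ t) (h1t : s.d1 ≤ t)
    (hst : s.supp ≤ t) (x : N.fib s.d1) :
    N.incl h0t (N.hol1 hN s x) = N.incl h1t x := by
  have hsupp : N.incl s.le0 (N.hol1 hN s x) = N.incl s.le1 x :=
    (N.holEquiv hN s.le0).apply_symm_apply (N.holEquiv hN s.le1 x)
  rw [← N.incl_comp s.le0 hst, hsupp, N.incl_comp]

theorem holPath_comp_apply {a b c : K} (p : SPath K a b) (q : SPath K b c) (x : N.fib a) :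
    N.holPath hN (p.comp q) x = N.holPath hN q (N.holPath hN p x) := by
  induction q with
  | nil => rfl
  | cons q s h1 h0 ih =>
      show N.holPath hN (.cons (p.comp q) s h1 h0) x = _
      simp only [CStarNet.holPath, StarAlgEquiv.trans_apply, ih]

theorem holPath_nervePath {a b : K} (h : a ≤ b) (x : N.fib a) :
    N.holPath hN (SPath.nervePath h) x = N.incl h x := by
  refine (N.holEquiv hN le_rfl).symm_apply_eq.2 ?_
  exact (N.incl_le_rfl b _).symm

/-- Transport in a net bundle is homotopy invariant: on a 2-simplex `c`, both sides become the
inclusion into the fibre over the support of `c`. -/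
theorem holPath_homotopic {a b : K} {p q : SPath K a b} (h : SPath.Homotopic p q) :
    N.holPath hN p = N.holPath hN q := by
  induction h with
  | refl p => rfl
  | symm _ ih => exact ih.symm
  | trans _ _ ih1 ih2 => exact ih1.trans ih2
  | comp_congr _ _ ih1 ih2 =>
      refine StarAlgEquiv.ext fun x => ?_
      rw [holPath_comp_apply hN, holPath_comp_apply hN, ih1, ih2]
  | degen s h0 h1 hs =>
      obtain ⟨ssupp, sd0, sd1, sle0, sle1⟩ := s
      dsimp at h0 h1 hs
      subst h0 h1 hs
      exact StarAlgEquiv.ext fun x => ((N.holEquiv hN sle0).symm_apply_apply x).symm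
  | triangle c h1 h0 =>
      obtain ⟨csupp, d0, d1, d2, le0, le1, le2, h00, h11, h10⟩ := c
      obtain ⟨s0, x0, y0, l00, l01⟩ := d0
      obtain ⟨s1, x1, y1, l10, l11⟩ := d1
      obtain ⟨s2, x2, y2, l20, l21⟩ := d2
      dsimp at h00 h11 h10 h1 h0 le0 le1 le2
      subst h00 h11 h10 h1 h0
      refine StarAlgEquiv.ext fun x => N.incl_injective (l00.trans le0) ?_
      show N.incl _ (N.hol1 hN ⟨s0, x0, y0, l00, l01⟩ (N.hol1 hN ⟨s2, y0, y1, l20, l21⟩ x))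
        = N.incl _ (N.hol1 hN ⟨s1, x0, y1, l10, l11⟩ x)
      rw [incl_hol1 hN ⟨s0, x0, y0, l00, l01⟩ _ (l01.trans le0) le0,
        incl_hol1 hN ⟨s2, y0, y1, l20, l21⟩ _ (l21.trans le2) le2,
        incl_hol1 hN ⟨s1, x0, y1, l10, l11⟩ _ (l21.trans le2) le1]


theorem exists_holonomy_invariant_state {o : K} (m : RightInvariantMean (Pi1 K o))
    (ψ₀ : CStarAlgState (N.fib o)) :
    ∃ ψ : CStarAlgState (N.fib o),
      ∀ (ℓ : SPath K o o) (x : N.fib o), ψ.lin (N.holPath hN ℓ x) = ψ.lin x := by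
  let Φ : Pi1 K o → CStarAlgState (N.fib o) :=
    Quotient.lift (fun ℓ => ψ₀.comap (N.holPath hN ℓ : N.fib o →⋆ₐ[ℂ] N.fib o))
      fun _ _ h => by rw [holPath_homotopic hN h]
  refine ⟨avgState m Φ, fun ℓ x => avgState_lin_eq m (Pi1.mk ℓ) fun γ => ?_⟩
  induction γ using Quotient.inductionOn with
  | h p => exact (congrArg ψ₀.lin (holPath_comp_apply hN ℓ p x)).symm

theorem lin_holPath_eq_of_invariant {o a : K} {ψ : CStarAlgState (N.fib o)}
    (hψ : ∀ (ℓ : SPath K o o) (x : N.fib o), ψ.lin (N.holPath hN ℓ x) = ψ.lin x)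
    (p q : SPath K a o) (x : N.fib a) :
    ψ.lin (N.holPath hN p x) = ψ.lin (N.holPath hN q x) := by
  have hpq : SPath.Homotopic (q.comp (q.reverse.comp p)) p := by
    rw [← SPath.comp_assoc]
    simpa using (SPath.comp_reverse_self q).comp_congr (.refl p)
  rw [← holPath_homotopic hN hpq, holPath_comp_apply, hψ]

def transportState {o : K} (hconn : ∀ a, Nonempty (SPath K a o)) (ψ : CStarAlgState (N.fib o))
    (hψ : ∀ (ℓ : SPath K o o) (x : N.fib o), ψ.lin (N.holPath hN ℓ x) = ψ.lin x) :
    NetState N where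
  st a := ψ.comap (N.holPath hN (hconn a).some : N.fib a →⋆ₐ[ℂ] N.fib o)
  compat b a h x := by
    show ψ.lin (N.holPath hN _ (N.incl h x)) = ψ.lin (N.holPath hN _ x)
    rw [← holPath_nervePath hN h, ← holPath_comp_apply hN]
    exact lin_holPath_eq_of_invariant hN hψ _ _ x

end CStarNet

def NetState.comap {N : CStarNet.{u, v} K} {M : CStarNet.{u, v''} K} (ω : NetState M)
    (ε : ∀ o, N.fib o →⋆ₐ[ℂ] M.fib o) (hε : IsNetMorphismOver N M ε) : NetState N where
  st o := (ω.st o).comap (ε o)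
  compat o a h x := by
    rw [CStarAlgState.comap_lin, CStarAlgState.comap_lin, hε h x]
    exact ω.compat h (ε o x)

theorem NetState.nonempty_of_bundle_morphism {N : CStarNet.{u, v} K} {NB : CStarNet.{u, v''} K}
    {o : K} (hconn : ∀ a, Nonempty (SPath K a o)) (m : RightInvariantMean (Pi1 K o))
    (hNB : IsCStarNetBundle NB) (ε : ∀ a, N.fib a →⋆ₐ[ℂ] NB.fib a)
    (hε : IsNetMorphismOver N NB ε) [Nontrivial (NB.fib o)] : Nonempty (NetState N) := by
  obtain ⟨ψ₀⟩ := CStarAlgState.nonempty_of_nontrivial (NB.fib o)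
  obtain ⟨ψ, hψ⟩ := NB.exists_holonomy_invariant_state hNB m ψ₀
  exact ⟨(NB.transportState hNB hconn ψ hψ).comap ε hε⟩

/-- for an amenable symmetry group `G` of the poset: (i) every
`G`-covariant C*-net bundle having a state has a `G`-invariant state; (ii) if in
addition the fundamental group of the poset is amenable, every nondegenerate
`G`-covariant net of C*-algebras has a `G`-invariant state. -/
theorem statement_9 {K : Type u} [PartialOrder K] {G : Type w} [Group G] [MulAction G K]
    (hconn : ∀ a b : K, Nonempty (SPath K a b)) (o : K)
    (hord : ∀ (g : G) (a b : K), a ≤ b → g • a ≤ g • b)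
    (hamG : IsAmenable G) :
    (∀ (N : CStarNet.{u, v} K), IsCStarNetBundle N → ∀ α : CovariantNet hord N,
       Nonempty (NetState N) → ∃ ω : NetState N, ω.Invariant α) ∧
    (IsAmenable (Pi1 K o) →
      ∀ (N : CStarNet.{u, v} K) (α : CovariantNet hord N)
        (NB : CStarNet.{u, max u v} K) (ε : ∀ o', N.fib o' →⋆ₐ[ℂ] NB.fib o'),
        IsEnvelope N NB ε → IsNondegenerate NB →
        ∃ ω : NetState N, ω.Invariant α) := by
  obtain ⟨m⟩ := hamG
  refine ⟨fun N _ α ⟨ω⟩ => α.exists_invariant_netState m ω, ?_⟩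
  rintro ⟨mπ⟩ N α NB ε ⟨hNB, hε, -⟩ hnd
  have := hnd o
  obtain ⟨ω⟩ := NetState.nonempty_of_bundle_morphism (fun a => hconn a o) mπ hNB ε hε
  exact α.exists_invariant_netState m ω

end AQFT
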